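/- arXiv:1101.1349 — 4 statements merged into one kernel-verified Lean document; each statement's English description precedes it below -/
import Mathlib

section
/- The sequence of coefficients γ_k defined by γ_k = c_k / b^k (for k = 0,...,4), where c_k ∈ ℚ(M,L) are the explicit coefficients c_4 = M^4, c_3 = 1+M^4+2LM^12+LM^14-LM^16+L^2M^20-L^2M^22-2L^2M^24-L^3M^32-L^3M^36, c_2 = (-1+LM^12)(-1-2LM^10-3LM^12+2LM^14-L^2M^16+2L^2M^18-4L^2M^20-2L^2M^22+3L^2M^24-3L^3M^28+2L^3M^30+4L^3M^32-2L^3M^34+L^3M^36-2L^4M^38+3L^4M^40+2L^4M^42+L^5M^52), c_1 = -L^2(M-1)^2 M^16 (M+1)^2 (1+LM^10)^2 (-1-M^4-2LM^12-LM^14+LM^16-L^2M^20+L^2M^22+2L^2M^24+L^3M^32+L^3M^36), c_0 = L^4(M-1)^4 M^36 (M+1)^4 (1+LM^10)^4, and b = 1/(L M^8 (1-M^2)(1+LM^10)), is palindromic: γ_0 = γ_4 and γ_1 = γ_3. -/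
/- STATEMENT 0: In the field ℚ(M,L), the coefficients γ_k = c_k / b^k are
palindromic: γ_0 = γ_4 and γ_1 = γ_3. -/

/-- The field ℚ(M,L) of rational functions in two variables. -/
abbrev Kf : Type := FractionRing (MvPolynomial (Fin 2) ℚ)

noncomputable def M : Kf := algebraMap (MvPolynomial (Fin 2) ℚ) Kf (MvPolynomial.X 0)
noncomputable def L : Kf := algebraMap (MvPolynomial (Fin 2) ℚ) Kf (MvPolynomial.X 1)

noncomputable def b : Kf := 1/(L*M^8*(1-M^2)*(1+L*M^10))

noncomputable def c4 : Kf := M^4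
noncomputable def c3 : Kf :=
  1+M^4+2*L*M^12+L*M^14-L*M^16+L^2*M^20-L^2*M^22-2*L^2*M^24-L^3*M^32-L^3*M^36
noncomputable def c2 : Kf :=
  (-1+L*M^12)*(-1-2*L*M^10-3*L*M^12+2*L*M^14-L^2*M^16+2*L^2*M^18-4*L^2*M^20
    -2*L^2*M^22+3*L^2*M^24-3*L^3*M^28+2*L^3*M^30+4*L^3*M^32-2*L^3*M^34+L^3*M^36
    -2*L^4*M^38+3*L^4*M^40+2*L^4*M^42+L^5*M^52)
noncomputable def c1 : Kf :=
  -L^2*(M-1)^2*M^16*(M+1)^2*(1+L*M^10)^2*(-1-M^4-2*L*M^12-L*M^14+L*M^16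
    -L^2*M^20+L^2*M^22+2*L^2*M^24+L^3*M^32+L^3*M^36)
noncomputable def c0 : Kf := L^4*(M-1)^4*M^36*(M+1)^4*(1+L*M^10)^4

lemma alg_ne (p : MvPolynomial (Fin 2) ℚ) (h : p ≠ 0) :
    algebraMap (MvPolynomial (Fin 2) ℚ) Kf p ≠ 0 := by
  intro h0
  exact h (IsFractionRing.injective (MvPolynomial (Fin 2) ℚ) Kf (by simpa using h0))

lemma hM : M ≠ 0 := alg_ne _ (MvPolynomial.X_ne_zero 0)
lemma hL : L ≠ 0 := alg_ne _ (MvPolynomial.X_ne_zero 1)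

lemma h1M : (1 : Kf) - M^2 ≠ 0 := by
  have : (1 : Kf) - M^2 = algebraMap (MvPolynomial (Fin 2) ℚ) Kf (1 - MvPolynomial.X 0 ^ 2) := by
    simp [M, map_sub, map_pow]
  rw [this]
  refine alg_ne _ (fun h => ?_)
  have := congrArg (MvPolynomial.eval (fun _ => (0 : ℚ))) h
  simp at this

lemma h1LM : (1 : Kf) + L * M^10 ≠ 0 := by
  have : (1 : Kf) + L * M^10
      = algebraMap (MvPolynomial (Fin 2) ℚ) Kf (1 + MvPolynomial.X 1 * MvPolynomial.X 0 ^ 10) := by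
    simp [M, L, map_add, map_mul, map_pow]
  rw [this]
  refine alg_ne _ (fun h => ?_)
  have := congrArg (MvPolynomial.eval (fun _ => (0 : ℚ))) h
  simp at this

theorem gamma_palindromic :
    c0 / b^0 = c4 / b^4 ∧ c1 / b^1 = c3 / b^3 := by
  have hM := hM; have hL := hL; have h1M := h1M; have h1LM := h1LM
  constructor
  · rw [c0, c4, b]
    field_simp
    ring
  · rw [c1, c3, b]
    field_simp
    ring
end

section
/- Let (v_n) be the sequence of six points in ℤ² given by v_n = {(0,0), (1,-4n+16), (n-1, 12n-12), (2n+1, 16n+18), (3n-1, 32n-10), (3n, 28n+6)}. For every integer n > 1, these six points are the vertices of their convex hull in ℝ², i.e., each of the six points is an extreme point of the convex hull of the set, and the convex hull is a hexagon. -/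
lemma sep_aux (a b : ℝ) (p : ℝ × ℝ) (T : Set (ℝ × ℝ))
    (h : ∀ q ∈ T, q ∈ {w : ℝ × ℝ | a * w.1 + b * w.2 < a * p.1 + b * p.2}) :
    p ∉ convexHull ℝ T := by
  intro hp
  have hlin : IsLinearMap ℝ (fun w : ℝ × ℝ => a * w.1 + b * w.2) := by
    constructor
    · intro x y; simp; ring
    · intro c x; simp [smul_eq_mul]; ring
  have hconv : Convex ℝ {w : ℝ × ℝ | a * w.1 + b * w.2 < a * p.1 + b * p.2} :=
    (convex_Iio (a * p.1 + b * p.2)).is_linear_preimage hlin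
  have h2 : p ∈ {w : ℝ × ℝ | a * w.1 + b * w.2 < a * p.1 + b * p.2} :=
    convexHull_min h hconv hp
  simp only [Set.mem_setOf_eq] at h2
  linarith

/- STATEMENT 7: For every integer n > 1, the six points
(0,0), (1,-4n+16), (n-1,12n-12), (2n+1,16n+18), (3n-1,32n-10), (3n,28n+6)
are distinct and each is an extreme point of their convex hull (the hull is a
hexagon with exactly these vertices). -/

theorem NPn_hexagon (n : ℤ) (hn : 1 < n) :
    let S : Set (ℝ × ℝ) :=
      {((0:ℝ), (0:ℝ)), (1, -4*(n:ℝ)+16), ((n:ℝ)-1, 12*(n:ℝ)-12),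
       (2*(n:ℝ)+1, 16*(n:ℝ)+18), (3*(n:ℝ)-1, 32*(n:ℝ)-10), (3*(n:ℝ), 28*(n:ℝ)+6)}
    S.ncard = 6 ∧ ∀ p ∈ S, p ∉ convexHull ℝ (S \ {p}) := by
  intro S
  have hn' : (2:ℝ) ≤ (n:ℝ) := by exact_mod_cast hn
  constructor
  · have h0 : ((0:ℝ), (0:ℝ)) ∉ ({(1, -4*(n:ℝ)+16), ((n:ℝ)-1, 12*(n:ℝ)-12),
       (2*(n:ℝ)+1, 16*(n:ℝ)+18), (3*(n:ℝ)-1, 32*(n:ℝ)-10), (3*(n:ℝ), 28*(n:ℝ)+6)} : Set (ℝ × ℝ)) := by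
      simp only [Set.mem_insert_iff, Set.mem_singleton_iff, Prod.mk.injEq, not_or]
      refine ⟨fun h => by nlinarith [h.1], fun h => by nlinarith [h.1],
        fun h => by nlinarith [h.1], fun h => by nlinarith [h.1], fun h => by nlinarith [h.1]⟩
    have h1 : ((1:ℝ), -4*(n:ℝ)+16) ∉ ({((n:ℝ)-1, 12*(n:ℝ)-12),
       (2*(n:ℝ)+1, 16*(n:ℝ)+18), (3*(n:ℝ)-1, 32*(n:ℝ)-10), (3*(n:ℝ), 28*(n:ℝ)+6)} : Set (ℝ × ℝ)) := by
      simp only [Set.mem_insert_iff, Set.mem_singleton_iff, Prod.mk.injEq, not_or]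
      refine ⟨fun h => by nlinarith [h.2], fun h => by nlinarith [h.1],
        fun h => by nlinarith [h.1], fun h => by nlinarith [h.1]⟩
    have h2 : ((n:ℝ)-1, 12*(n:ℝ)-12) ∉ ({(2*(n:ℝ)+1, 16*(n:ℝ)+18),
       (3*(n:ℝ)-1, 32*(n:ℝ)-10), (3*(n:ℝ), 28*(n:ℝ)+6)} : Set (ℝ × ℝ)) := by
      simp only [Set.mem_insert_iff, Set.mem_singleton_iff, Prod.mk.injEq, not_or]
      refine ⟨fun h => by nlinarith [h.1], fun h => by nlinarith [h.1], fun h => by nlinarith [h.1]⟩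
    have h3 : (2*(n:ℝ)+1, 16*(n:ℝ)+18) ∉ ({(3*(n:ℝ)-1, 32*(n:ℝ)-10),
       (3*(n:ℝ), 28*(n:ℝ)+6)} : Set (ℝ × ℝ)) := by
      simp only [Set.mem_insert_iff, Set.mem_singleton_iff, Prod.mk.injEq, not_or]
      refine ⟨fun h => by nlinarith [h.1], fun h => by nlinarith [h.1]⟩
    have h4 : (3*(n:ℝ)-1, 32*(n:ℝ)-10) ∉ ({(3*(n:ℝ), 28*(n:ℝ)+6)} : Set (ℝ × ℝ)) := by
      simp only [Set.mem_singleton_iff, Prod.mk.injEq, not_and]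
      intro h; nlinarith [h]
    show (insert ((0:ℝ),(0:ℝ)) (insert (1, -4*(n:ℝ)+16) (insert ((n:ℝ)-1, 12*(n:ℝ)-12)
      (insert (2*(n:ℝ)+1, 16*(n:ℝ)+18) (insert (3*(n:ℝ)-1, 32*(n:ℝ)-10)
      (({(3*(n:ℝ), 28*(n:ℝ)+6)}) : Set (ℝ × ℝ)))))) : Set (ℝ × ℝ)).ncard = 6
    rw [Set.ncard_insert_of_notMem h0 (by
        exact ((((Set.finite_singleton _).insert _).insert _).insert _).insert _),
      Set.ncard_insert_of_notMem h1 (by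
        exact (((Set.finite_singleton _).insert _).insert _).insert _),
      Set.ncard_insert_of_notMem h2 (by
        exact ((Set.finite_singleton _).insert _).insert _),
      Set.ncard_insert_of_notMem h3 (by
        exact (Set.finite_singleton _).insert _),
      Set.ncard_insert_of_notMem h4 (Set.finite_singleton _),
      Set.ncard_singleton]
  · intro p hp
    simp only [S, Set.mem_insert_iff, Set.mem_singleton_iff] at hp
    rcases hp with rfl | rfl | rfl | rfl | rfl | rfl
    · -- p0 : functional (28-16n, n-2)
      apply sep_aux (28 - 16*(n:ℝ)) ((n:ℝ) - 2)
      rintro q ⟨hq, hq'⟩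
      simp only [S, Set.mem_insert_iff, Set.mem_singleton_iff] at hq
      simp only [Set.mem_singleton_iff] at hq'
      rcases hq with rfl | rfl | rfl | rfl | rfl | rfl
      · exact absurd rfl hq'
      · simp only [Set.mem_setOf_eq]; nlinarith [sq_nonneg ((n:ℝ)-1)]
      · simp only [Set.mem_setOf_eq]; nlinarith [sq_nonneg ((n:ℝ)-1)]
      · simp only [Set.mem_setOf_eq]; nlinarith
      · simp only [Set.mem_setOf_eq]; nlinarith
      · simp only [Set.mem_setOf_eq]; nlinarith
    · -- p1 : functional (16n+18, -(2n+1))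
      apply sep_aux (16*(n:ℝ) + 18) (-(2*(n:ℝ)+1))
      rintro q ⟨hq, hq'⟩
      simp only [S, Set.mem_insert_iff, Set.mem_singleton_iff] at hq
      simp only [Set.mem_singleton_iff] at hq'
      rcases hq with rfl | rfl | rfl | rfl | rfl | rfl
      · simp only [Set.mem_setOf_eq]; nlinarith
      · exact absurd rfl hq'
      · simp only [Set.mem_setOf_eq]; nlinarith
      · simp only [Set.mem_setOf_eq]; nlinarith
      · simp only [Set.mem_setOf_eq]; nlinarith
      · simp only [Set.mem_setOf_eq]; nlinarith
    · -- p2 : functional (-(32n-10), 3n-1)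
      apply sep_aux (-(32*(n:ℝ) - 10)) (3*(n:ℝ) - 1)
      rintro q ⟨hq, hq'⟩
      simp only [S, Set.mem_insert_iff, Set.mem_singleton_iff] at hq
      simp only [Set.mem_singleton_iff] at hq'
      rcases hq with rfl | rfl | rfl | rfl | rfl | rfl
      · simp only [Set.mem_setOf_eq]; nlinarith
      · simp only [Set.mem_setOf_eq]; nlinarith
      · exact absurd rfl hq'
      · simp only [Set.mem_setOf_eq]; nlinarith
      · simp only [Set.mem_setOf_eq]; nlinarith
      · simp only [Set.mem_setOf_eq]; nlinarith
    · -- p3 : functional (32n-10, -(3n-1))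
      apply sep_aux (32*(n:ℝ) - 10) (-(3*(n:ℝ) - 1))
      rintro q ⟨hq, hq'⟩
      simp only [S, Set.mem_insert_iff, Set.mem_singleton_iff] at hq
      simp only [Set.mem_singleton_iff] at hq'
      rcases hq with rfl | rfl | rfl | rfl | rfl | rfl
      · simp only [Set.mem_setOf_eq]; nlinarith
      · simp only [Set.mem_setOf_eq]; nlinarith
      · simp only [Set.mem_setOf_eq]; nlinarith
      · exact absurd rfl hq'
      · simp only [Set.mem_setOf_eq]; nlinarith
      · simp only [Set.mem_setOf_eq]; nlinarith
    · -- p4 : functional (-(16n+18), 2n+1)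
      apply sep_aux (-(16*(n:ℝ) + 18)) (2*(n:ℝ) + 1)
      rintro q ⟨hq, hq'⟩
      simp only [S, Set.mem_insert_iff, Set.mem_singleton_iff] at hq
      simp only [Set.mem_singleton_iff] at hq'
      rcases hq with rfl | rfl | rfl | rfl | rfl | rfl
      · simp only [Set.mem_setOf_eq]; nlinarith
      · simp only [Set.mem_setOf_eq]; nlinarith
      · simp only [Set.mem_setOf_eq]; nlinarith
      · simp only [Set.mem_setOf_eq]; nlinarith
      · exact absurd rfl hq'
      · simp only [Set.mem_setOf_eq]; nlinarith
    · -- p5 : functional (16n-28, -(n-2))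
      apply sep_aux (16*(n:ℝ) - 28) (-((n:ℝ) - 2))
      rintro q ⟨hq, hq'⟩
      simp only [S, Set.mem_insert_iff, Set.mem_singleton_iff] at hq
      simp only [Set.mem_singleton_iff] at hq'
      rcases hq with rfl | rfl | rfl | rfl | rfl | rfl
      · simp only [Set.mem_setOf_eq]; nlinarith
      · simp only [Set.mem_setOf_eq]; nlinarith [sq_nonneg ((n:ℝ)-1)]
      · simp only [Set.mem_setOf_eq]; nlinarith [sq_nonneg ((n:ℝ)-1)]
      · simp only [Set.mem_setOf_eq]; nlinarith [sq_nonneg ((n:ℝ)-1)]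
      · simp only [Set.mem_setOf_eq]; nlinarith [sq_nonneg ((n:ℝ)-1)]
      · exact absurd rfl hq'
end

section
/- Suppose (A_n)_{n∈ℤ} is a sequence of Laurent polynomials in ℚ[M^{±1}, L^{±1}] such that the shifted sequence P_n(M,L) := A_n(M, L M^{-4n}) satisfies a linear recursion of order 4 with constant coefficients in ℚ(M,L) (nonzero leading and trailing coefficients). If the Newton polygon of P_n has vertices whose coordinates are affine-linear in n for all large n, then the Newton polygon of A_n has vertices whose coordinates are polynomials in n of degree at most 2 for all large n. -/
/-!
The substitution `L ↦ L M^{-4n}` moves exponents by the integral shear `shear n`, so the Newton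
polygon of `A n` is the image of that of `P n` under the real linear map `(x, y) ↦ (x, y + 4n x)`.
A linear map carries the convex hull of finitely many points to the convex hull of their images,
and it sends a vertex `(a₁ n + b₁, a₂ n + b₂)` to
`(a₁ n + b₁, 4 a₁ n² + (a₂ + 4 b₁) n + b₂)`, whose coordinates are quadratic in `n`.
-/

/-- Laurent polynomials ℚ[M^{±1}, L^{±1}]; an exponent pair p = (x,y) records the
exponent x of L and y of M ((L,M)-coordinates). -/
abbrev Laurent : Type := AddMonoidAlgebra ℚ (ℤ × ℤ)

/-- The Newton polygon of a Laurent polynomial. -/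
noncomputable def newton (f : Laurent) : Set (ℝ × ℝ) :=
  convexHull ℝ ((fun p : ℤ × ℤ => ((p.1 : ℝ), (p.2 : ℝ))) '' ↑f.coeff.support)

/-- The shear of exponents corresponding to the substitution L ↦ L M^{-4n}. -/
def shear (n : ℤ) : (ℤ × ℤ) ≃ (ℤ × ℤ) where
  toFun p := (p.1, p.2 - 4*n*p.1)
  invFun p := (p.1, p.2 + 4*n*p.1)
  left_inv p := by cases p; simp
  right_inv p := by cases p; simp

open Set

def shearLinear (t : ℝ) : (ℝ × ℝ) →ₗ[ℝ] (ℝ × ℝ) :=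
  (LinearMap.fst ℝ ℝ ℝ).prod (LinearMap.snd ℝ ℝ ℝ + t • LinearMap.fst ℝ ℝ ℝ)

@[simp]
lemma shearLinear_apply (t : ℝ) (p : ℝ × ℝ) : shearLinear t p = (p.1, p.2 + t * p.1) := rfl

lemma newton_ofCoeff_equivMapDomain (f : Laurent) (e : ℤ × ℤ ≃ ℤ × ℤ)
    (T : (ℝ × ℝ) →ₗ[ℝ] (ℝ × ℝ))
    (hT : ∀ p : ℤ × ℤ, T ((p.1 : ℝ), (p.2 : ℝ)) = (((e p).1 : ℝ), ((e p).2 : ℝ))) :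
    newton (AddMonoidAlgebra.ofCoeff (Finsupp.equivMapDomain e f.coeff)) = T '' newton f := by
  have hsupp : (Finsupp.equivMapDomain e f.coeff).support = f.coeff.support.map e.toEmbedding :=
    rfl
  rw [newton, newton, T.image_convexHull, AddMonoidAlgebra.coeff_ofCoeff, hsupp,
    Finset.coe_map, ← image_comp, ← image_comp]
  exact congrArg _ (image_congr fun p _ => (hT p).symm)

lemma newton_eq_shearLinear_image {A P : Laurent} (n : ℤ)
    (hP : P = AddMonoidAlgebra.ofCoeff (Finsupp.equivMapDomain (shear n) A.coeff)) :
    newton A = shearLinear (4 * n) '' newton P := by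
  have hA : A = AddMonoidAlgebra.ofCoeff (Finsupp.equivMapDomain (shear n).symm P.coeff) := by
    rw [hP, AddMonoidAlgebra.coeff_ofCoeff, ← Finsupp.equivMapDomain_trans,
      Equiv.self_trans_symm, Finsupp.equivMapDomain_refl, AddMonoidAlgebra.ofCoeff_coeff]
  rw [hA]
  exact newton_ofCoeff_equivMapDomain P _ _ fun p => by simp [shear]

def affineVertexHull {k : ℕ} (a b : Fin k → ℚ × ℚ) (n : ℤ) : Set (ℝ × ℝ) :=
  convexHull ℝ (range fun i : Fin k =>
    ((((a i).1 * n + (b i).1 : ℚ) : ℝ), (((a i).2 * n + (b i).2 : ℚ) : ℝ)))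

def quadraticVertexHull {k : ℕ} (a b d : Fin k → ℚ × ℚ) (n : ℤ) : Set (ℝ × ℝ) :=
  convexHull ℝ (range fun i : Fin k =>
    ((((a i).1 * n^2 + (b i).1 * n + (d i).1 : ℚ) : ℝ),
     (((a i).2 * n^2 + (b i).2 * n + (d i).2 : ℚ) : ℝ)))

lemma shearLinear_image_affineVertexHull {k : ℕ} (a b : Fin k → ℚ × ℚ) (s : ℚ) (n : ℤ) :
    shearLinear (s * n) '' affineVertexHull a b n =
      quadraticVertexHull (fun i => (0, s * (a i).1))
        (fun i => ((a i).1, (a i).2 + s * (b i).1)) b n := by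
  rw [affineVertexHull, quadraticVertexHull, LinearMap.image_convexHull, ← range_comp]
  congr 2
  funext i
  simp only [Function.comp_apply, shearLinear_apply, Prod.mk.injEq]
  push_cast
  constructor <;> ring

theorem newton_quadratic_of_shifted_holonomic_general
    (A P : ℤ → Laurent)
    (hP : ∀ n : ℤ, P n = AddMonoidAlgebra.ofCoeff (Finsupp.equivMapDomain (shear n) (A n).coeff))
    (hlin : ∃ (N : ℤ) (k : ℕ) (a b : Fin k → ℚ × ℚ), ∀ n : ℤ, N ≤ n →
      newton (P n) = convexHull ℝ (Set.range fun i : Fin k =>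
        ((((a i).1 * n + (b i).1 : ℚ) : ℝ), (((a i).2 * n + (b i).2 : ℚ) : ℝ)))) :
    ∃ (N : ℤ) (k : ℕ) (a b d : Fin k → ℚ × ℚ), ∀ n : ℤ, N ≤ n →
      newton (A n) = convexHull ℝ (Set.range fun i : Fin k =>
        ((((a i).1 * n^2 + (b i).1 * n + (d i).1 : ℚ) : ℝ),
         (((a i).2 * n^2 + (b i).2 * n + (d i).2 : ℚ) : ℝ))) := by
  obtain ⟨N, k, a, b, hPn⟩ := hlin
  refine ⟨N, k, fun i => (0, 4 * (a i).1), fun i => ((a i).1, (a i).2 + 4 * (b i).1), b,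
    fun n hn => ?_⟩
  calc newton (A n) = shearLinear (4 * n) '' newton (P n) := newton_eq_shearLinear_image n (hP n)
    _ = shearLinear ((4 : ℚ) * n) '' affineVertexHull a b n := by
      rw [hPn n hn, Rat.cast_ofNat, affineVertexHull]
    _ = _ := shearLinear_image_affineVertexHull a b 4 n

theorem newton_quadratic_of_shifted_holonomic
    (A P : ℤ → Laurent)
    (hP : ∀ n : ℤ, P n = AddMonoidAlgebra.ofCoeff (Finsupp.equivMapDomain (shear n) (A n).coeff))
    (c : Fin 5 → Laurent) (hc0 : c 0 ≠ 0) (hc4 : c 4 ≠ 0)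
    (hrec : ∀ n : ℤ,
      c 0 * P n + c 1 * P (n+1) + c 2 * P (n+2) + c 3 * P (n+3) + c 4 * P (n+4) = 0)
    (hlin : ∃ (N : ℤ) (k : ℕ) (a b : Fin k → ℚ × ℚ), ∀ n : ℤ, N ≤ n →
      newton (P n) = convexHull ℝ (Set.range fun i : Fin k =>
        ((((a i).1 * n + (b i).1 : ℚ) : ℝ), (((a i).2 * n + (b i).2 : ℚ) : ℝ)))) :
    ∃ (N : ℤ) (k : ℕ) (a b d : Fin k → ℚ × ℚ), ∀ n : ℤ, N ≤ n →
      newton (A n) = convexHull ℝ (Set.range fun i : Fin k =>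
        ((((a i).1 * n^2 + (b i).1 * n + (d i).1 : ℚ) : ℝ),
         (((a i).2 * n^2 + (b i).2 * n + (d i).2 : ℚ) : ℝ))) :=
  newton_quadratic_of_shifted_holonomic_general A P hP hlin
end

section
/- The six points {(0, 4n+28), (1, 38), (-n, -12n+26), (-2n-3, -16n-4), (-3n-4, -28n-16), (-3n-3, -32n-6)} in ℤ² are, for every integer n < -1, the extreme points of their convex hull (i.e., the convex hull is a hexagon with exactly these vertices). -/
/-- If a linear functional is strictly larger at `p` than on all of `T`,
then `p` is not in the convex hull of `T`. -/
lemma sep_lemma (a b : ℝ) (T : Set (ℝ × ℝ)) (p : ℝ × ℝ)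
    (hT : ∀ q ∈ T, a * q.1 + b * q.2 < a * p.1 + b * p.2) :
    p ∉ convexHull ℝ T := by
  intro hp
  have hlin : IsLinearMap ℝ (fun x : ℝ × ℝ => a * x.1 + b * x.2) := by
    constructor
    · intro x y; simp [Prod.fst_add, Prod.snd_add]; ring
    · intro c x; simp [Prod.smul_fst, Prod.smul_snd, smul_eq_mul]; ring
  have hc : Convex ℝ {x : ℝ × ℝ | a * x.1 + b * x.2 < a * p.1 + b * p.2} :=
    convex_halfSpace_lt hlin (a * p.1 + b * p.2)
  have h2 := convexHull_min hT hc hp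
  have h3 : a * p.1 + b * p.2 < a * p.1 + b * p.2 := h2
  exact lt_irrefl _ h3

/- STATEMENT 18: For every integer n < -1, the six points
(0,4n+28), (1,38), (-n,-12n+26), (-2n-3,-16n-4), (-3n-4,-28n-16), (-3n-3,-32n-6)
are distinct and each is an extreme point of their convex hull (the hull is a
hexagon with exactly these vertices). -/

theorem NQn_hexagon (n : ℤ) (hn : n < -1) :
    let S : Set (ℝ × ℝ) :=
      {((0:ℝ), 4*(n:ℝ)+28), (1, 38), (-(n:ℝ), -12*(n:ℝ)+26),
       (-2*(n:ℝ)-3, -16*(n:ℝ)-4), (-3*(n:ℝ)-4, -28*(n:ℝ)-16),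
       (-3*(n:ℝ)-3, -32*(n:ℝ)-6)}
    S.ncard = 6 ∧ ∀ p ∈ S, p ∉ convexHull ℝ (S \ {p}) := by
  intro S
  have hn' : (n : ℝ) ≤ -2 := by exact_mod_cast (show n ≤ -2 by omega)
  constructor
  · -- cardinality
    have h1 : ((0:ℝ), 4*(n:ℝ)+28) ∉ ({(1, 38), (-(n:ℝ), -12*(n:ℝ)+26),
        (-2*(n:ℝ)-3, -16*(n:ℝ)-4), (-3*(n:ℝ)-4, -28*(n:ℝ)-16),
        (-3*(n:ℝ)-3, -32*(n:ℝ)-6)} : Set (ℝ × ℝ)) := by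
      intro h
      simp only [Set.mem_insert_iff, Set.mem_singleton_iff, Prod.mk.injEq] at h
      rcases h with ⟨h1, h2⟩ | ⟨h1, h2⟩ | ⟨h1, h2⟩ | ⟨h1, h2⟩ | ⟨h1, h2⟩ <;> linarith
    have h2 : ((1:ℝ), (38:ℝ)) ∉ ({(-(n:ℝ), -12*(n:ℝ)+26),
        (-2*(n:ℝ)-3, -16*(n:ℝ)-4), (-3*(n:ℝ)-4, -28*(n:ℝ)-16),
        (-3*(n:ℝ)-3, -32*(n:ℝ)-6)} : Set (ℝ × ℝ)) := by
      intro h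
      simp only [Set.mem_insert_iff, Set.mem_singleton_iff, Prod.mk.injEq] at h
      rcases h with ⟨h1, h2⟩ | ⟨h1, h2⟩ | ⟨h1, h2⟩ | ⟨h1, h2⟩ <;> linarith
    have h3 : (-(n:ℝ), -12*(n:ℝ)+26) ∉ ({(-2*(n:ℝ)-3, -16*(n:ℝ)-4),
        (-3*(n:ℝ)-4, -28*(n:ℝ)-16),
        (-3*(n:ℝ)-3, -32*(n:ℝ)-6)} : Set (ℝ × ℝ)) := by
      intro h
      simp only [Set.mem_insert_iff, Set.mem_singleton_iff, Prod.mk.injEq] at h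
      rcases h with ⟨h1, h2⟩ | ⟨h1, h2⟩ | ⟨h1, h2⟩ <;> linarith
    have h4 : (-2*(n:ℝ)-3, -16*(n:ℝ)-4) ∉ ({(-3*(n:ℝ)-4, -28*(n:ℝ)-16),
        (-3*(n:ℝ)-3, -32*(n:ℝ)-6)} : Set (ℝ × ℝ)) := by
      intro h
      simp only [Set.mem_insert_iff, Set.mem_singleton_iff, Prod.mk.injEq] at h
      rcases h with ⟨h1, h2⟩ | ⟨h1, h2⟩ <;> linarith
    have h5 : (-3*(n:ℝ)-4, -28*(n:ℝ)-16) ∉ ({(-3*(n:ℝ)-3,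
        -32*(n:ℝ)-6)} : Set (ℝ × ℝ)) := by
      intro h
      simp only [Set.mem_singleton_iff, Prod.mk.injEq] at h
      rcases h with ⟨h1, h2⟩; linarith
    show Set.ncard ({((0:ℝ), 4*(n:ℝ)+28), (1, 38), (-(n:ℝ), -12*(n:ℝ)+26),
        (-2*(n:ℝ)-3, -16*(n:ℝ)-4), (-3*(n:ℝ)-4, -28*(n:ℝ)-16),
        (-3*(n:ℝ)-3, -32*(n:ℝ)-6)} : Set (ℝ × ℝ)) = 6
    rw [Set.ncard_insert_of_notMem h1, Set.ncard_insert_of_notMem h2,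
      Set.ncard_insert_of_notMem h3, Set.ncard_insert_of_notMem h4,
      Set.ncard_insert_of_notMem h5, Set.ncard_singleton]
  · intro p hp
    have hmem : p = ((0:ℝ), 4*(n:ℝ)+28) ∨ p = (1, 38) ∨ p = (-(n:ℝ), -12*(n:ℝ)+26) ∨
        p = (-2*(n:ℝ)-3, -16*(n:ℝ)-4) ∨ p = (-3*(n:ℝ)-4, -28*(n:ℝ)-16) ∨
        p = (-3*(n:ℝ)-3, -32*(n:ℝ)-6) := by
      have h0 : p ∈ ({((0:ℝ), 4*(n:ℝ)+28), (1, 38), (-(n:ℝ), -12*(n:ℝ)+26),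
          (-2*(n:ℝ)-3, -16*(n:ℝ)-4), (-3*(n:ℝ)-4, -28*(n:ℝ)-16),
          (-3*(n:ℝ)-3, -32*(n:ℝ)-6)} : Set (ℝ × ℝ)) := hp
      simpa only [Set.mem_insert_iff, Set.mem_singleton_iff] using h0
    rcases hmem with rfl | rfl | rfl | rfl | rfl | rfl
    · -- P1 : f = -x
      apply sep_lemma (-1) 0
      rintro q ⟨hqS, hqne⟩
      have hq : q = ((0:ℝ), 4*(n:ℝ)+28) ∨ q = (1, 38) ∨ q = (-(n:ℝ), -12*(n:ℝ)+26) ∨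
          q = (-2*(n:ℝ)-3, -16*(n:ℝ)-4) ∨ q = (-3*(n:ℝ)-4, -28*(n:ℝ)-16) ∨
          q = (-3*(n:ℝ)-3, -32*(n:ℝ)-6) := by
        have h0 : q ∈ ({((0:ℝ), 4*(n:ℝ)+28), (1, 38), (-(n:ℝ), -12*(n:ℝ)+26),
            (-2*(n:ℝ)-3, -16*(n:ℝ)-4), (-3*(n:ℝ)-4, -28*(n:ℝ)-16),
            (-3*(n:ℝ)-3, -32*(n:ℝ)-6)} : Set (ℝ × ℝ)) := hqS
        simpa only [Set.mem_insert_iff, Set.mem_singleton_iff] using h0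
      have hne : q ≠ _ := fun h => hqne h
      rcases hq with rfl | rfl | rfl | rfl | rfl | rfl
      · exact absurd rfl hne
      all_goals dsimp only; nlinarith
    · -- P2 : f = (2n-11)x + y
      apply sep_lemma (2*(n:ℝ)-11) 1
      rintro q ⟨hqS, hqne⟩
      have hq : q = ((0:ℝ), 4*(n:ℝ)+28) ∨ q = (1, 38) ∨ q = (-(n:ℝ), -12*(n:ℝ)+26) ∨
          q = (-2*(n:ℝ)-3, -16*(n:ℝ)-4) ∨ q = (-3*(n:ℝ)-4, -28*(n:ℝ)-16) ∨
          q = (-3*(n:ℝ)-3, -32*(n:ℝ)-6) := by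
        have h0 : q ∈ ({((0:ℝ), 4*(n:ℝ)+28), (1, 38), (-(n:ℝ), -12*(n:ℝ)+26),
            (-2*(n:ℝ)-3, -16*(n:ℝ)-4), (-3*(n:ℝ)-4, -28*(n:ℝ)-16),
            (-3*(n:ℝ)-3, -32*(n:ℝ)-6)} : Set (ℝ × ℝ)) := hqS
        simpa only [Set.mem_insert_iff, Set.mem_singleton_iff] using h0
      have hne : q ≠ _ := fun h => hqne h
      rcases hq with rfl | rfl | rfl | rfl | rfl | rfl
      · dsimp only; nlinarith
      · exact absurd rfl hne
      all_goals dsimp only; nlinarith [sq_nonneg ((n:ℝ)+2), sq_nonneg (n:ℝ)]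
    · -- P3 : f = -11x + y
      apply sep_lemma (-11) 1
      rintro q ⟨hqS, hqne⟩
      have hq : q = ((0:ℝ), 4*(n:ℝ)+28) ∨ q = (1, 38) ∨ q = (-(n:ℝ), -12*(n:ℝ)+26) ∨
          q = (-2*(n:ℝ)-3, -16*(n:ℝ)-4) ∨ q = (-3*(n:ℝ)-4, -28*(n:ℝ)-16) ∨
          q = (-3*(n:ℝ)-3, -32*(n:ℝ)-6) := by
        have h0 : q ∈ ({((0:ℝ), 4*(n:ℝ)+28), (1, 38), (-(n:ℝ), -12*(n:ℝ)+26),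
            (-2*(n:ℝ)-3, -16*(n:ℝ)-4), (-3*(n:ℝ)-4, -28*(n:ℝ)-16),
            (-3*(n:ℝ)-3, -32*(n:ℝ)-6)} : Set (ℝ × ℝ)) := hqS
        simpa only [Set.mem_insert_iff, Set.mem_singleton_iff] using h0
      have hne : q ≠ _ := fun h => hqne h
      rcases hq with rfl | rfl | rfl | rfl | rfl | rfl
      · dsimp only; nlinarith
      · dsimp only; nlinarith
      · exact absurd rfl hne
      all_goals dsimp only; nlinarith
    · -- P4 : f = 11x - y
      apply sep_lemma 11 (-1)
      rintro q ⟨hqS, hqne⟩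
      have hq : q = ((0:ℝ), 4*(n:ℝ)+28) ∨ q = (1, 38) ∨ q = (-(n:ℝ), -12*(n:ℝ)+26) ∨
          q = (-2*(n:ℝ)-3, -16*(n:ℝ)-4) ∨ q = (-3*(n:ℝ)-4, -28*(n:ℝ)-16) ∨
          q = (-3*(n:ℝ)-3, -32*(n:ℝ)-6) := by
        have h0 : q ∈ ({((0:ℝ), 4*(n:ℝ)+28), (1, 38), (-(n:ℝ), -12*(n:ℝ)+26),
            (-2*(n:ℝ)-3, -16*(n:ℝ)-4), (-3*(n:ℝ)-4, -28*(n:ℝ)-16),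
            (-3*(n:ℝ)-3, -32*(n:ℝ)-6)} : Set (ℝ × ℝ)) := hqS
        simpa only [Set.mem_insert_iff, Set.mem_singleton_iff] using h0
      have hne : q ≠ _ := fun h => hqne h
      rcases hq with rfl | rfl | rfl | rfl | rfl | rfl
      · dsimp only; nlinarith
      · dsimp only; nlinarith
      · dsimp only; nlinarith
      · exact absurd rfl hne
      all_goals dsimp only; nlinarith
    · -- P5 : f = (-2n+11)x - y
      apply sep_lemma (-2*(n:ℝ)+11) (-1)
      rintro q ⟨hqS, hqne⟩
      have hq : q = ((0:ℝ), 4*(n:ℝ)+28) ∨ q = (1, 38) ∨ q = (-(n:ℝ), -12*(n:ℝ)+26) ∨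
          q = (-2*(n:ℝ)-3, -16*(n:ℝ)-4) ∨ q = (-3*(n:ℝ)-4, -28*(n:ℝ)-16) ∨
          q = (-3*(n:ℝ)-3, -32*(n:ℝ)-6) := by
        have h0 : q ∈ ({((0:ℝ), 4*(n:ℝ)+28), (1, 38), (-(n:ℝ), -12*(n:ℝ)+26),
            (-2*(n:ℝ)-3, -16*(n:ℝ)-4), (-3*(n:ℝ)-4, -28*(n:ℝ)-16),
            (-3*(n:ℝ)-3, -32*(n:ℝ)-6)} : Set (ℝ × ℝ)) := hqS
        simpa only [Set.mem_insert_iff, Set.mem_singleton_iff] using h0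
      have hne : q ≠ _ := fun h => hqne h
      rcases hq with rfl | rfl | rfl | rfl | rfl | rfl
      · dsimp only; nlinarith [sq_nonneg ((n:ℝ)+2)]
      · dsimp only; nlinarith [sq_nonneg ((n:ℝ)+2)]
      · dsimp only; nlinarith [sq_nonneg ((n:ℝ)+2)]
      · dsimp only; nlinarith [sq_nonneg ((n:ℝ)+2)]
      · exact absurd rfl hne
      · dsimp only; nlinarith
    · -- P6 : f = x
      apply sep_lemma 1 0
      rintro q ⟨hqS, hqne⟩
      have hq : q = ((0:ℝ), 4*(n:ℝ)+28) ∨ q = (1, 38) ∨ q = (-(n:ℝ), -12*(n:ℝ)+26) ∨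
          q = (-2*(n:ℝ)-3, -16*(n:ℝ)-4) ∨ q = (-3*(n:ℝ)-4, -28*(n:ℝ)-16) ∨
          q = (-3*(n:ℝ)-3, -32*(n:ℝ)-6) := by
        have h0 : q ∈ ({((0:ℝ), 4*(n:ℝ)+28), (1, 38), (-(n:ℝ), -12*(n:ℝ)+26),
            (-2*(n:ℝ)-3, -16*(n:ℝ)-4), (-3*(n:ℝ)-4, -28*(n:ℝ)-16),
            (-3*(n:ℝ)-3, -32*(n:ℝ)-6)} : Set (ℝ × ℝ)) := hqS
        simpa only [Set.mem_insert_iff, Set.mem_singleton_iff] using h0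
      have hne : q ≠ _ := fun h => hqne h
      rcases hq with rfl | rfl | rfl | rfl | rfl | rfl
      · dsimp only; nlinarith
      · dsimp only; nlinarith
      · dsimp only; nlinarith
      · dsimp only; nlinarith
      · dsimp only; nlinarith
      · exact absurd rfl hne
end
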